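/- For every integer n ∈ ℤ there exists a unique binary word w of odd length such that: w avoids the factor 11, w does not begin with the prefix 000, w does not begin with the prefix 101, and n = val_F(w). (Existence and uniqueness of the canonical Fibonacci representation of an integer.) -/

import Mathlib

/-!
Write an odd word as `c u` with `|u| = 2k`. Then `val_F(c u) = Z(u) - c F_{2k}`, where
`Z(u) = Σ u_i F_i` is the Zeckendorf value, and Zeckendorf's theorem (no-11 words of length `m`
correspond bijectively to `[0, F_{m+1})`, the leading digit being `1` exactly on `[F_m, F_{m+1})`)
shows that `val_F` is a bijection from the no-11 words of length `2k+1` onto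
`I_k = [-F_{2k}, F_{2k+1})`, the first digit recording the sign.

Replacing a prefix `000` by `0` or `101` by `1` preserves the value, so every integer has a
representation avoiding these prefixes. Conversely, a no-11 word of length `2k+3` with neither
prefix has its value outside `I_k`, and the intervals `I_k` are nested; hence a canonical word
of value `n` has the least length `2k+1` with `n ∈ I_k`, and injectivity at fixed length gives
uniqueness.
-/

/-- Fibonacci sequence with `F 0 = 1`, `F 1 = 1`, `F 2 = 2`. -/
def F : ℕ → ℤ
  | 0 => 1
  | 1 => 1
  | (n+2) => F (n+1) + F n

/-- Numerical value of a binary digit. -/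
def bv (x : Bool) : ℤ := if x then 1 else 0

/-- Value of an odd-length binary word `w = w_{2k+1} ⋯ w_1` (most significant
digit first): `val_F(w) = Σ_{i=1}^{2k} w_i F_i − w_{2k+1} F_{2k}`. -/
def valF (w : List Bool) : ℤ :=
  (∑ i ∈ Finset.range (w.length - 1), bv (w.reverse.getD i false) * F (i+1))
    - bv (w.reverse.getD (w.length - 1) false) * F (w.length - 1)

/-- The word has no factor `11`. -/
def no11 (w : List Bool) : Prop :=
  List.Chain' (fun x y => ¬(x = true ∧ y = true)) w

/-- Words of the canonical representation language: odd length, no factor 11,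
not beginning with 000 nor with 101. -/
def IsRep (w : List Bool) : Prop :=
  Odd w.length ∧ no11 w ∧
    ¬ ([false, false, false] <+: w) ∧ ¬ ([true, false, true] <+: w)

/-- `Ik k = {i ∈ ℤ : −F_{2k} ≤ i < F_{2k+1}}`. -/
def Ik (k : ℕ) : Set ℤ := {i : ℤ | -F (2*k) ≤ i ∧ i < F (2*k+1)}

/-- Shifted version of `Ik` incorporating `I_{−1} = ∅`. -/
def Iext : ℕ → Set ℤ
  | 0 => ∅
  | (k+1) => Ik k

/-- The morphism `h : 0 ↦ 00, 1 ↦ 01, 2 ↦ 10` on single letters. -/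
def h3 : Fin 3 → List Bool
  | 0 => [false, false]
  | 1 => [false, true]
  | 2 => [true, false]

lemma F_add_two (n : ℕ) : F (n + 2) = F (n + 1) + F n := rfl

lemma F_pos : ∀ n, 0 < F n
  | 0 => one_pos
  | 1 => one_pos
  | n + 2 => by rw [F_add_two]; exact add_pos (F_pos (n + 1)) (F_pos n)

lemma F_mono : Monotone F := by
  refine monotone_nat_of_le_succ fun n => ?_
  cases n with
  | zero => decide
  | succ n => rw [F_add_two]; linarith [F_pos n]

lemma self_le_F : ∀ n : ℕ, (n : ℤ) ≤ F n
  | 0 => zero_le_one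
  | 1 => le_rfl
  | n + 2 => by
    have ih := self_le_F (n + 1)
    push_cast at ih ⊢
    rw [F_add_two]
    linarith [F_pos n]

lemma Ik_mono : Monotone Ik := fun _ _ hjk _ ⟨hlo, hhi⟩ =>
  ⟨(neg_le_neg (F_mono (by omega))).trans hlo, hhi.trans_le (F_mono (by omega))⟩

lemma mem_Ik_natAbs (n : ℤ) : n ∈ Ik n.natAbs := by
  have hlo := self_le_F (2 * n.natAbs)
  have hhi := self_le_F (2 * n.natAbs + 1)
  push_cast at hlo hhi
  constructor <;> linarith [le_abs_self n, neg_abs_le n]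

@[simp] lemma bv_true : bv true = 1 := rfl

@[simp] lemma bv_false : bv false = 0 := rfl

/-- `Σ_{i=1}^{m} u_i F_i` for `u = u_m ⋯ u_1` (most significant digit first). -/
def fibSum (u : List Bool) : ℤ :=
  ∑ i ∈ Finset.range u.length, bv (u.reverse.getD i false) * F (i + 1)

lemma getD_reverse_cons_length (a : Bool) (u : List Bool) :
    (a :: u).reverse.getD u.length false = a := by
  rw [List.reverse_cons, List.getD_append_right _ _ _ _ (by simp)]; simp

lemma sum_getD_reverse_cons (a : Bool) (u : List Bool) :
    ∑ i ∈ Finset.range u.length, bv ((a :: u).reverse.getD i false) * F (i + 1) = fibSum u :=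
  Finset.sum_congr rfl fun i hi => by
    rw [List.reverse_cons, List.getD_append _ _ _ _ (by simpa using hi)]

lemma fibSum_cons (a : Bool) (u : List Bool) :
    fibSum (a :: u) = fibSum u + bv a * F (u.length + 1) := by
  rw [fibSum, List.length_cons, Finset.sum_range_succ, sum_getD_reverse_cons,
    getD_reverse_cons_length]

lemma valF_cons (c : Bool) (u : List Bool) :
    valF (c :: u) = fibSum u - bv c * F u.length := by
  rw [valF, List.length_cons, Nat.add_sub_cancel, sum_getD_reverse_cons,
    getD_reverse_cons_length]

lemma no11_cons_cons {a b : Bool} {u : List Bool} :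
    no11 (a :: b :: u) ↔ ¬(a = true ∧ b = true) ∧ no11 (b :: u) :=
  List.isChain_cons_cons

lemma no11_false_cons {u : List Bool} : no11 (false :: u) ↔ no11 u := by
  cases u with
  | nil => exact iff_of_true (List.isChain_singleton _) List.isChain_nil
  | cons b u => simp [no11_cons_cons]

lemma fibSum_nonneg : ∀ u : List Bool, 0 ≤ fibSum u
  | [] => le_rfl
  | a :: u => by
    rw [fibSum_cons]
    have : 0 ≤ bv a := by cases a <;> simp
    exact add_nonneg (fibSum_nonneg u) (mul_nonneg this (F_pos _).le)

lemma fibSum_lt : ∀ {u : List Bool}, no11 u → fibSum u < F (u.length + 1)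
  | [], _ => one_pos
  | [true], _ => by decide
  | false :: u, h => by
    rw [fibSum_cons, bv_false, zero_mul, add_zero]
    exact (fibSum_lt (no11_false_cons.mp h)).trans_le (F_mono (by simp))
  | true :: false :: u, h => by
    have ih := fibSum_lt (no11_false_cons.mp (no11_cons_cons.mp h).2)
    simp only [fibSum_cons, bv_true, bv_false, List.length_cons] at ih ⊢
    linarith [F_add_two (u.length + 1)]
  | true :: true :: _, h => absurd (no11_cons_cons.mp h).1 (by simp)

lemma fibSum_lt_of_no11_true_cons {u : List Bool} (h : no11 (true :: u)) :
    fibSum u < F u.length := by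
  match u, h with
  | [], _ => exact one_pos
  | false :: u, h => simpa [fibSum_cons] using fibSum_lt (no11_cons_cons.mp h).2.tail
  | true :: _, h => exact absurd (no11_cons_cons.mp h).1 (by simp)

lemma exists_no11_cons_fibSum_eq (m : ℕ) {n : ℤ} (b : Bool) (hn : 0 ≤ n) (hlt : n < F (m + 1))
    (hb : b = true → n < F m) : ∃ u : List Bool, u.length = m ∧ no11 (b :: u) ∧ fibSum u = n := by
  induction m generalizing n b with
  | zero =>
    obtain rfl : n = 0 := by have : F (0 + 1) = 1 := rfl; omega
    exact ⟨[], rfl, List.isChain_singleton _, rfl⟩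
  | succ m ih =>
    by_cases hsmall : n < F (m + 1)
    · obtain ⟨u, hlen, hu, hval⟩ := ih false hn hsmall (by simp)
      refine ⟨false :: u, by simp [hlen], no11_cons_cons.mpr ⟨by simp, hu⟩, ?_⟩
      simp [fibSum_cons, hval]
    · have hb : b = false := by cases b <;> simp_all
      have hF : F (m + 1 + 1) = F (m + 1) + F m := F_add_two m
      obtain ⟨u, hlen, hu, hval⟩ := ih true (n := n - F (m + 1)) (by linarith)
        (by linarith [F_mono m.le_succ]) (fun _ => by linarith)
      refine ⟨true :: u, by simp [hlen], hb ▸ no11_cons_cons.mpr ⟨by simp, hu⟩, ?_⟩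
      simp [fibSum_cons, hval, hlen]

lemma eq_of_fibSum_eq {u v : List Bool} (hu : no11 u) (hv : no11 v) (hlen : u.length = v.length)
    (h : fibSum u = fibSum v) : u = v := by
  induction u generalizing v with
  | nil => exact (List.length_eq_zero_iff.mp hlen.symm).symm
  | cons a u ih =>
    obtain ⟨b, v, rfl⟩ := List.exists_cons_of_length_eq_add_one hlen.symm
    simp only [List.length_cons, Nat.add_right_cancel_iff] at hlen
    have hu' := fibSum_lt (u := u) hu.tail
    have hv' := fibSum_lt (u := v) hv.tail
    have := fibSum_nonneg u
    have := fibSum_nonneg v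
    rw [fibSum_cons, fibSum_cons, hlen] at h
    rw [hlen] at hu'
    cases a <;> cases b <;> simp only [bv_true, bv_false] at h
    · simp [ih hu.tail hv.tail hlen (by simpa using h)]
    · linarith
    · linarith
    · simp [ih hu.tail hv.tail hlen (by simpa using h)]

lemma valF_neg_iff {c : Bool} {u : List Bool} (h : no11 (c :: u)) :
    valF (c :: u) < 0 ↔ c = true := by
  cases c
  · simpa [valF_cons] using fibSum_nonneg u
  · simpa [valF_cons] using fibSum_lt_of_no11_true_cons h

lemma valF_mem_Ik {k : ℕ} {w : List Bool} (hw : no11 w) (hlen : w.length = 2 * k + 1) :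
    valF w ∈ Ik k := by
  obtain ⟨c, u, rfl⟩ := List.exists_cons_of_length_eq_add_one hlen
  have hu : u.length = 2 * k := by simpa using hlen
  have hlt := fibSum_lt hw.tail
  have := fibSum_nonneg u
  cases c
  · simp only [valF_cons, bv_false, zero_mul, sub_zero, List.tail_cons, hu] at hlt ⊢
    exact ⟨by linarith [F_pos (2 * k)], hlt⟩
  · have hlt' := fibSum_lt_of_no11_true_cons hw
    simp only [valF_cons, bv_true, one_mul, hu] at hlt' ⊢
    exact ⟨by linarith, by linarith [F_pos (2 * k + 1)]⟩

lemma eq_of_valF_eq {w v : List Bool} (hw : no11 w) (hv : no11 v) (hlen : w.length = v.length)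
    (h : valF w = valF v) : w = v := by
  match w, v, hlen with
  | [], [], _ => rfl
  | c :: u, d :: t, hlen =>
    have hcd : c = d := by
      rw [← Bool.coe_iff_coe, ← valF_neg_iff hw, ← valF_neg_iff hv, h]
    subst hcd
    have hlen' : u.length = t.length := by simpa using hlen
    rw [valF_cons, valF_cons, hlen', sub_left_inj] at h
    rw [eq_of_fibSum_eq (u := u) (v := t) hw.tail hv.tail hlen' h]

lemma exists_valF_eq {k : ℕ} {n : ℤ} (hn : n ∈ Ik k) :
    ∃ w : List Bool, w.length = 2 * k + 1 ∧ no11 w ∧ valF w = n := by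
  obtain ⟨hlo, hhi⟩ := hn
  by_cases hneg : n < 0
  · obtain ⟨u, hlen, hu, hval⟩ :=
      exists_no11_cons_fibSum_eq (2 * k) (n := n + F (2 * k)) true (by linarith)
        (by linarith [F_mono (2 * k).le_succ]) (fun _ => by linarith)
    exact ⟨true :: u, by simp [hlen], hu, by simp [valF_cons, hval, hlen]⟩
  · obtain ⟨u, hlen, hu, hval⟩ :=
      exists_no11_cons_fibSum_eq (2 * k) false (by linarith) hhi (by simp)
    exact ⟨false :: u, by simp [hlen], hu, by simp [valF_cons, hval]⟩

lemma valF_drop_two {w : List Bool}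
    (h : [false, false, false] <+: w ∨ [true, false, true] <+: w) :
    valF (w.drop 2) = valF w := by
  rcases h with ⟨s, rfl⟩ | ⟨s, rfl⟩
  · simp [valF_cons, fibSum_cons]
  · simp only [List.cons_append, List.nil_append, List.drop_succ_cons, List.drop_zero,
      valF_cons, fibSum_cons, List.length_cons, bv_true, bv_false]
    linarith [F_add_two s.length]

lemma valF_not_mem_Ik {j : ℕ} {w : List Bool} (hw : no11 w) (hlen : w.length = 2 * j + 3)
    (h000 : ¬ [false, false, false] <+: w) (h101 : ¬ [true, false, true] <+: w) :
    valF w ∉ Ik j := by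
  obtain ⟨p, q, c, s, rfl⟩ : ∃ p q c s, w = p :: q :: c :: s := by
    match w, hlen with | p :: q :: c :: s, _ => exact ⟨p, q, c, s, rfl⟩
  have hs : s.length = 2 * j := by simpa using hlen
  have hlt := fibSum_lt (u := s) (no11_cons_cons.mp (no11_cons_cons.mp hw).2).2.tail
  have := fibSum_nonneg s
  have hF := F_add_two (2 * j)
  have := F_pos (2 * j)
  rintro ⟨hlo, hhi⟩
  -- the admissible prefixes 001 and 010 give values `≥ F_{2j+1}`, and 100 gives values `< -F_{2j}`
  cases p <;> cases q <;> cases c <;>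
    simp only [valF_cons, fibSum_cons, List.length_cons, bv_true, bv_false, hs] at hlo hhi hlt
  · exact h000 ⟨s, rfl⟩
  · linarith
  · linarith
  · simp [no11_cons_cons] at hw
  · linarith
  · exact h101 ⟨s, rfl⟩
  all_goals simp [no11_cons_cons] at hw

lemma IsRep.length_le {j : ℕ} {w : List Bool} (hw : IsRep w) (hj : valF w ∈ Ik j) :
    w.length ≤ 2 * j + 1 := by
  obtain ⟨⟨i, hi⟩, h11, h000, h101⟩ := hw
  by_contra! hlong
  obtain ⟨i, rfl⟩ : ∃ i', i = i' + 1 := ⟨i - 1, by omega⟩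
  exact valF_not_mem_Ik h11 (by omega) h000 h101 (Ik_mono (by omega) hj)

lemma IsRep.length_le_of_valF_eq {w v : List Bool} (hw : IsRep w) (hv : IsRep v)
    (h : valF w = valF v) : w.length ≤ v.length := by
  obtain ⟨j, hj⟩ := hv.1
  exact hj ▸ hw.length_le (h ▸ valF_mem_Ik hv.2.1 hj)

lemma exists_isRep_valF_eq_of_no11 {w : List Bool} (hw : no11 w) (hodd : Odd w.length) :
    ∃ v, IsRep v ∧ valF v = valF w := by
  induction hlen : w.length using Nat.strong_induction_on generalizing w with
  | _ m ih =>
    by_cases hpre : [false, false, false] <+: w ∨ [true, false, true] <+: w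
    · have h3 : 3 ≤ w.length := by
        rcases hpre with h | h <;> simpa using h.length_le
      obtain ⟨v, hv, hval⟩ := ih _ (by simp; omega) (hw.drop 2)
        (by obtain ⟨i, hi⟩ := hodd; exact ⟨i - 1, by simp; omega⟩) rfl
      exact ⟨v, hv, hval.trans (valF_drop_two hpre)⟩
    · exact ⟨w, ⟨hodd, hw, not_or.mp hpre⟩, rfl⟩

lemma exists_isRep_valF_eq (n : ℤ) : ∃ w, IsRep w ∧ valF w = n := by
  obtain ⟨w, hlen, hw, rfl⟩ := exists_valF_eq (mem_Ik_natAbs n)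
  exact exists_isRep_valF_eq_of_no11 hw (by simp [hlen])

/-- Every integer has a unique canonical Fibonacci representation: an odd-length
binary word avoiding the factor 11 and the prefixes 000 and 101. -/
theorem exists_unique_repF (n : ℤ) :
    ∃! w : List Bool, IsRep w ∧ valF w = n := by
  obtain ⟨w, hw, rfl⟩ := exists_isRep_valF_eq n
  refine ⟨w, ⟨hw, rfl⟩, fun v ⟨hv, hval⟩ => ?_⟩
  have hlen : v.length = w.length :=
    le_antisymm (hv.length_le_of_valF_eq hw hval) (hw.length_le_of_valF_eq hv hval.symm)
  exact eq_of_valF_eq hv.2.1 hw.2.1 hlen hval
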